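/- arXiv:2406.16570 — 3 statements merged into one kernel-verified Lean document; each statement's English description precedes it below -/
import Mathlib

section
/- Let f(x) = tan(sin x) etc. Then the limit as x → 0 of (tan(sin x) − sin(tan x)) / (arctan(arcsin x) − arcsin(arctan x)) equals 1. -/
open Real Filter Topology Asymptotics

open Real Filter Topology Asymptotics

/-- small': x^n * w with w → 0 is o(x^n). -/
lemma small' {w : ℝ → ℝ} (hw : Tendsto w (𝓝 (0:ℝ)) (𝓝 (0:ℝ))) (n : ℕ) :
    (fun x => x ^ n * w x) =o[𝓝 (0:ℝ)] fun x => x ^ n := by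
  have h1 : w =o[𝓝 (0:ℝ)] (fun _ => (1:ℝ)) := (isLittleO_one_iff ℝ).2 hw
  have := (isBigO_refl (fun x : ℝ => x ^ n) (𝓝 (0:ℝ))).mul_isLittleO h1
  simpa using this

lemma small {s : ℝ → ℝ} (hs : Continuous s) (n : ℕ) :
    (fun x => x ^ (n+1) * s x) =o[𝓝 (0:ℝ)] fun x => x ^ n := by
  have hw : Tendsto (fun x : ℝ => x * s x) (𝓝 (0:ℝ)) (𝓝 (0:ℝ)) := by
    have := (continuous_id.mul hs).tendsto 0
    simp at this
    exact this
  have := small' hw n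
  simpa [pow_succ, mul_assoc] using this

lemma factor_bigO {t : ℝ → ℝ} (ht : Continuous t) :
    (fun x => x * t x) =O[𝓝 (0:ℝ)] fun x => x := by
  have := (isBigO_refl (fun x : ℝ => x) (𝓝 (0:ℝ))).mul ((ht.tendsto 0).isBigO_one ℝ)
  simpa using this

/-- Integrating a little-o expansion of the derivative. -/
lemma ex_integral {n : ℕ} {f f' : ℝ → ℝ}
    (hd : ∀ᶠ x in 𝓝 (0:ℝ), HasDerivAt f (f' x) x) (h0 : f 0 = 0)
    (hf' : f' =o[𝓝 (0:ℝ)] fun x => x ^ n) :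
    f =o[𝓝 (0:ℝ)] fun x => x ^ (n+1) := by
  rw [isLittleO_iff] at hf' ⊢
  intro c hc
  have hev := hd.and (hf' hc)
  rw [Metric.eventually_nhds_iff] at hev
  obtain ⟨δ, hδ, hball⟩ := hev
  have hmem : Metric.ball (0:ℝ) δ ∈ 𝓝 (0:ℝ) := Metric.ball_mem_nhds _ hδ
  filter_upwards [hmem] with x hx
  have hxd : |x| < δ := by simpa [Real.dist_eq] using hx
  have habs : ∀ t ∈ Set.uIcc (0:ℝ) x, |t| ≤ |x| := by
    intro t ht
    rcases le_total (0:ℝ) x with h | h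
    · rw [Set.uIcc_of_le h] at ht
      rw [abs_of_nonneg ht.1, abs_of_nonneg h]; exact ht.2
    · rw [Set.uIcc_of_ge h] at ht
      rw [abs_of_nonpos ht.2, abs_of_nonpos h]; linarith [ht.1]
  have key : ‖f x - f 0‖ ≤ c * |x| ^ n * ‖x - 0‖ := by
    apply Convex.norm_image_sub_le_of_norm_hasDerivWithin_le
      (f' := f') (fun t ht => ?_) (fun t ht => ?_) (convex_uIcc _ _)
      Set.left_mem_uIcc Set.right_mem_uIcc
    · have : |t| < δ := lt_of_le_of_lt (habs t ht) hxd
      exact ((hball (by simpa [Real.dist_eq] using this)).1).hasDerivWithinAt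
    · have ht' : |t| < δ := lt_of_le_of_lt (habs t ht) hxd
      have := (hball (by simpa [Real.dist_eq] using ht')).2
      calc ‖f' t‖ ≤ c * ‖t ^ n‖ := this
        _ ≤ c * |x| ^ n := by
            rw [norm_pow]
            exact mul_le_mul_of_nonneg_left (pow_le_pow_left₀ (abs_nonneg _) (habs t ht) n) hc.le
  rw [h0, sub_zero] at key
  calc ‖f x‖ ≤ c * |x| ^ n * ‖x - 0‖ := key
    _ = c * ‖x ^ (n+1)‖ := by rw [sub_zero]; simp [pow_succ, Real.norm_eq_abs, abs_pow]; ring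

/-- Composition of 7th-order expansions, outer polynomial odd of degree 7. -/
lemma ex_comp_odd {f g p t : ℝ → ℝ} {c1 c3 c5 c7 : ℝ}
    (hf : (fun x => f x - p x) =o[𝓝 (0:ℝ)] fun x => x ^ 7)
    (hg : (fun y => g y - (c1*y + c3*y^3 + c5*y^5 + c7*y^7)) =o[𝓝 (0:ℝ)] fun y => y ^ 7)
    (ht : Continuous t) (hpt : ∀ x, p x = x * t x) :
    (fun x => g (f x) - (c1 * p x + c3 * (p x)^3 + c5 * (p x)^5 + c7 * (p x)^7))
      =o[𝓝 (0:ℝ)] fun x => x ^ 7 := by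
  have hpc : Continuous p := by
    have : p = fun x => x * t x := funext hpt
    rw [this]; exact continuous_id.mul ht
  have hp0 : Tendsto p (𝓝 (0:ℝ)) (𝓝 (0:ℝ)) := by
    have := hpc.tendsto 0
    simpa [hpt 0] using this
  have hpO : p =O[𝓝 (0:ℝ)] fun x => x := by
    have : p = fun x => x * t x := funext hpt
    rw [this]; exact factor_bigO ht
  have hx7O : (fun x : ℝ => x ^ 7) =O[𝓝 (0:ℝ)] fun x => x := by
    have : (fun x : ℝ => x ^ 7) = fun x => x * x ^ 6 := by funext x; ring
    rw [this]; exact factor_bigO (continuous_pow 6)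
  have hf0 : Tendsto f (𝓝 (0:ℝ)) (𝓝 (0:ℝ)) := by
    have h1 : Tendsto (fun x => f x - p x) (𝓝 (0:ℝ)) (𝓝 (0:ℝ)) :=
      hf.isBigO.trans_tendsto (by simpa using (continuous_pow 7).tendsto (0:ℝ))
    have := h1.add hp0
    simpa using this
  have hfO : f =O[𝓝 (0:ℝ)] fun x => x := by
    have := (hf.isBigO.trans hx7O).add hpO
    simpa using this
  -- term 1 : g (f x) - q (f x)
  have term1 : (fun x => g (f x) - (c1*(f x) + c3*(f x)^3 + c5*(f x)^5 + c7*(f x)^7))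
      =o[𝓝 (0:ℝ)] fun x => x ^ 7 :=
    (hg.comp_tendsto hf0).trans_isBigO (hfO.pow 7)
  -- term 2 : q (f x) - q (p x)
  set Q : ℝ × ℝ → ℝ := fun z => c1 + c3*(z.1^2 + z.1*z.2 + z.2^2)
      + c5*(z.1^4 + z.1^3*z.2 + z.1^2*z.2^2 + z.1*z.2^3 + z.2^4)
      + c7*(z.1^6 + z.1^5*z.2 + z.1^4*z.2^2 + z.1^3*z.2^3 + z.1^2*z.2^4 + z.1*z.2^5 + z.2^6)
      with hQdef
  have hQc : Continuous Q := by rw [hQdef]; fun_prop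
  have hQt : Tendsto (fun x => Q (f x, p x)) (𝓝 (0:ℝ)) (𝓝 (Q (0, 0))) :=
    (hQc.tendsto (0,0)).comp (hf0.prodMk_nhds hp0)
  have term2 : (fun x => (f x - p x) * Q (f x, p x)) =o[𝓝 (0:ℝ)] fun x => x ^ 7 := by
    have := hf.mul_isBigO (hQt.isBigO_one ℝ)
    simpa using this
  have := term1.add term2
  refine this.congr' (Eventually.of_forall fun x => ?_) EventuallyEq.rfl
  simp only [hQdef]; ring

lemma cos0 : (fun x => Real.cos x - 1) =o[𝓝 (0:ℝ)] fun x : ℝ => x ^ 0 := by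
  have h : Tendsto (fun x => Real.cos x - 1) (𝓝 (0:ℝ)) (𝓝 (0:ℝ)) := by
    have := (Real.continuous_cos.sub (continuous_const (y := (1:ℝ)))).tendsto 0
    simp at this
    exact this
  simpa using (isLittleO_one_iff ℝ).2 h

lemma sin1 : (fun x => Real.sin x - x) =o[𝓝 (0:ℝ)] fun x : ℝ => x ^ 1 :=
  ex_integral (Eventually.of_forall fun x => by
      exact (Real.hasDerivAt_sin x).sub (hasDerivAt_id x))
    (by simp) cos0

lemma cos2 : (fun x => Real.cos x - (1 - x^2/2)) =o[𝓝 (0:ℝ)] fun x : ℝ => x ^ 2 :=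
  ex_integral (Eventually.of_forall fun x => by
      have h := (Real.hasDerivAt_cos x).sub ((hasDerivAt_const x (1:ℝ)).sub
        ((hasDerivAt_pow 2 x).div_const 2))
      exact (h.congr_deriv (by push_cast; ring) : HasDerivAt _ (-(Real.sin x - x)) x))
    (by norm_num) (by simpa using sin1.neg_left.congr' (Eventually.of_forall fun x => by ring) EventuallyEq.rfl)

lemma sin3 : (fun x => Real.sin x - (x - x^3/6)) =o[𝓝 (0:ℝ)] fun x : ℝ => x ^ 3 :=
  ex_integral (Eventually.of_forall fun x => by
      have h := (Real.hasDerivAt_sin x).sub ((hasDerivAt_id x).sub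
        ((hasDerivAt_pow 3 x).div_const 6))
      exact h.congr_deriv (by push_cast; ring))
    (by norm_num) cos2

lemma cos4 : (fun x => Real.cos x - (1 - x^2/2 + x^4/24)) =o[𝓝 (0:ℝ)] fun x : ℝ => x ^ 4 :=
  ex_integral (Eventually.of_forall fun x => by
      have h := (Real.hasDerivAt_cos x).sub (((hasDerivAt_const x (1:ℝ)).sub
        ((hasDerivAt_pow 2 x).div_const 2)).add ((hasDerivAt_pow 4 x).div_const 24))
      exact (h.congr_deriv (by push_cast; ring) : HasDerivAt _ (-(Real.sin x - (x - x^3/6))) x))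
    (by norm_num) (by simpa using sin3.neg_left.congr' (Eventually.of_forall fun x => by ring) EventuallyEq.rfl)

lemma sin5 : (fun x => Real.sin x - (x - x^3/6 + x^5/120)) =o[𝓝 (0:ℝ)] fun x : ℝ => x ^ 5 :=
  ex_integral (Eventually.of_forall fun x => by
      have h := (Real.hasDerivAt_sin x).sub (((hasDerivAt_id x).sub
        ((hasDerivAt_pow 3 x).div_const 6)).add ((hasDerivAt_pow 5 x).div_const 120))
      exact h.congr_deriv (by push_cast; ring))
    (by norm_num) cos4

lemma cos6 : (fun x => Real.cos x - (1 - x^2/2 + x^4/24 - x^6/720)) =o[𝓝 (0:ℝ)] fun x : ℝ => x ^ 6 :=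
  ex_integral (Eventually.of_forall fun x => by
      have h := (Real.hasDerivAt_cos x).sub ((((hasDerivAt_const x (1:ℝ)).sub
        ((hasDerivAt_pow 2 x).div_const 2)).add ((hasDerivAt_pow 4 x).div_const 24)).sub
        ((hasDerivAt_pow 6 x).div_const 720))
      exact (h.congr_deriv (by push_cast; ring) : HasDerivAt _ (-(Real.sin x - (x - x^3/6 + x^5/120))) x))
    (by norm_num) (by simpa using sin5.neg_left.congr' (Eventually.of_forall fun x => by ring) EventuallyEq.rfl)

lemma sin7 : (fun x => Real.sin x - (x - x^3/6 + x^5/120 - x^7/5040)) =o[𝓝 (0:ℝ)] fun x : ℝ => x ^ 7 :=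
  ex_integral (Eventually.of_forall fun x => by
      have h := (Real.hasDerivAt_sin x).sub ((((hasDerivAt_id x).sub
        ((hasDerivAt_pow 3 x).div_const 6)).add ((hasDerivAt_pow 5 x).div_const 120)).sub
        ((hasDerivAt_pow 7 x).div_const 5040))
      exact h.congr_deriv (by push_cast; ring))
    (by norm_num) cos6

lemma arctan'6 : (fun x : ℝ => 1/(1+x^2) - (1 - x^2 + x^4 - x^6)) =o[𝓝 (0:ℝ)] fun x : ℝ => x ^ 6 := by
  have hw : Tendsto (fun x : ℝ => x^2/(1+x^2)) (𝓝 (0:ℝ)) (𝓝 (0:ℝ)) := by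
    have hc : ContinuousAt (fun x : ℝ => x^2/(1+x^2)) 0 :=
      ContinuousAt.div (by fun_prop) (by fun_prop) (by norm_num)
    have := hc.tendsto
    simpa using this
  refine (small' hw 6).congr' (Eventually.of_forall fun x => ?_) EventuallyEq.rfl
  have h : (1:ℝ) + x^2 ≠ 0 := by positivity
  field_simp
  ring

lemma arctan7 : (fun x => Real.arctan x - (x - x^3/3 + x^5/5 - x^7/7)) =o[𝓝 (0:ℝ)] fun x : ℝ => x ^ 7 :=
  ex_integral (Eventually.of_forall fun x => by
      have h := (Real.hasDerivAt_arctan x).sub ((((hasDerivAt_id x).sub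
        ((hasDerivAt_pow 3 x).div_const 3)).add ((hasDerivAt_pow 5 x).div_const 5)).sub
        ((hasDerivAt_pow 7 x).div_const 7))
      exact h.congr_deriv (by push_cast; ring))
    (by norm_num) arctan'6

lemma arcsin'6 : (fun x : ℝ => 1/Real.sqrt (1-x^2) - (1 + x^2/2 + 3*x^4/8 + 5*x^6/16))
    =o[𝓝 (0:ℝ)] fun x : ℝ => x ^ 6 := by
  set P : ℝ → ℝ := fun x => 1 + x^2/2 + 3*x^4/8 + 5*x^6/16 with hP
  set m : ℝ → ℝ := fun x => 35/64 + (7/32)*x^2 + (35/256)*x^4 + (25/256)*x^6 with hm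
  set w : ℝ → ℝ := fun x => x^2 * m x / (Real.sqrt (1-x^2) * (1 + P x * Real.sqrt (1-x^2))) with hwdef
  have hw : Tendsto w (𝓝 (0:ℝ)) (𝓝 (0:ℝ)) := by
    have hc : ContinuousAt w 0 := by
      apply ContinuousAt.div
      · fun_prop
      · fun_prop
      · norm_num [hP, Real.sqrt_one]
    have := hc.tendsto
    simpa [hwdef, Real.sqrt_one] using this
  refine (small' hw 6).congr' ?_ EventuallyEq.rfl
  have hmem : Metric.ball (0:ℝ) (1/2) ∈ 𝓝 (0:ℝ) := Metric.ball_mem_nhds _ (by norm_num)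
  filter_upwards [hmem] with x hx
  have hxa : |x| < 1/2 := by simpa [Real.dist_eq] using hx
  have hx2 : x^2 < 1 := by nlinarith [abs_nonneg x, sq_abs x, abs_lt.1 hxa]
  have hu : (0:ℝ) < 1 - x^2 := by linarith
  have hs0 : 0 < Real.sqrt (1-x^2) := Real.sqrt_pos.2 hu
  have hs2 : (Real.sqrt (1-x^2))^2 = 1 - x^2 := Real.sq_sqrt hu.le
  show x ^ 6 * (x^2 * m x / (Real.sqrt (1-x^2) * (1 + P x * Real.sqrt (1-x^2))))
      = 1/Real.sqrt (1-x^2) - P x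
  set s : ℝ := Real.sqrt (1 - x^2) with hs
  clear_value s
  have hPpos : 0 < P x := by rw [hP]; positivity
  have hden : s * (1 + P x * s) ≠ 0 := by positivity
  have key : (1 - P x * s) * (1 + P x * s) = x^8 * m x := by
    rw [hP, hm]; linear_combination (-(1 + x^2/2 + 3*x^4/8 + 5*x^6/16)^2) * hs2
  have h1 : 1/s - P x = (1 - P x * s)/s := by
    field_simp
  have h2 : (1 - P x * s)/s = (x^8 * m x)/(s*(1 + P x * s)) := by
    rw [div_eq_div_iff hs0.ne' hden]
    linear_combination s * key
  rw [h1, h2]; ring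

lemma arcsin7 : (fun x => Real.arcsin x - (x + x^3/6 + 3*x^5/40 + 5*x^7/112))
    =o[𝓝 (0:ℝ)] fun x : ℝ => x ^ 7 := by
  apply ex_integral (f' := fun x : ℝ => 1/Real.sqrt (1-x^2) - (1 + x^2/2 + 3*x^4/8 + 5*x^6/16))
    ?_ (by norm_num) arcsin'6
  have hmem : Metric.ball (0:ℝ) (1/2) ∈ 𝓝 (0:ℝ) := Metric.ball_mem_nhds _ (by norm_num)
  filter_upwards [hmem] with x hx
  have hxa : |x| < 1/2 := by simpa [Real.dist_eq] using hx
  have h1 : x ≠ -1 := by intro h; rw [h] at hxa; norm_num at hxa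
  have h2 : x ≠ 1 := by intro h; rw [h] at hxa; norm_num at hxa
  have h := (Real.hasDerivAt_arcsin h1 h2).sub ((((hasDerivAt_id x).add
    ((hasDerivAt_pow 3 x).div_const 6)).add (((hasDerivAt_pow 5 x).const_mul 3).div_const 40)).add
    (((hasDerivAt_pow 7 x).const_mul 5).div_const 112))
  exact h.congr_deriv (by push_cast; ring)

lemma tan7 : (fun x => Real.tan x - (x + x^3/3 + 2*x^5/15 + 17*x^7/315))
    =o[𝓝 (0:ℝ)] fun x : ℝ => x ^ 7 := by
  set T : ℝ → ℝ := fun x => x + x^3/3 + 2*x^5/15 + 17*x^7/315 with hT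
  set C : ℝ → ℝ := fun x => 1 - x^2/2 + x^4/24 - x^6/720 with hC
  -- sin x - T x * cos x = o(x^7)
  have hTO : T =O[𝓝 (0:ℝ)] fun x => x := by
    have : T = fun x => x * (1 + x^2/3 + 2*x^4/15 + 17*x^6/315) := by funext x; rw [hT]; ring
    rw [this]; exact factor_bigO (by fun_prop)
  have hcosC : (fun x => Real.cos x - C x) =o[𝓝 (0:ℝ)] fun x : ℝ => x ^ 6 := by
    rw [hC]; exact cos6
  have hb : (fun x => T x * (Real.cos x - C x)) =o[𝓝 (0:ℝ)] fun x : ℝ => x ^ 7 := by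
    have := hTO.mul_isLittleO hcosC
    refine this.congr' EventuallyEq.rfl (Eventually.of_forall fun x => ?_)
    ring
  have hc : (fun x => (x - x^3/6 + x^5/120 - x^7/5040) - T x * C x) =o[𝓝 (0:ℝ)] fun x : ℝ => x ^ 7 := by
    have := small (s := fun x : ℝ => (331/15120)*x - (13/6300)*x^3 + (17/226800)*x^5) (by fun_prop) 7
    refine this.congr' (Eventually.of_forall fun x => ?_) EventuallyEq.rfl
    rw [hT, hC]; ring
  have hsc : (fun x => Real.sin x - T x * Real.cos x) =o[𝓝 (0:ℝ)] fun x : ℝ => x ^ 7 := by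
    have hs := sin7
    refine ((hs.sub hb).add hc).congr' (Eventually.of_forall fun x => ?_) EventuallyEq.rfl
    ring
  have hcosne : ∀ᶠ x in 𝓝 (0:ℝ), Real.cos x ≠ 0 :=
    (Real.continuous_cos.tendsto' 0 1 (by simp)).eventually_ne one_ne_zero
  have hinv : Tendsto (fun x => (Real.cos x)⁻¹) (𝓝 (0:ℝ)) (𝓝 (1:ℝ)) := by
    have := (Real.continuous_cos.tendsto' 0 1 (by simp)).inv₀ one_ne_zero
    simpa using this
  have := hsc.mul_isBigO (hinv.isBigO_one ℝ)
  refine this.congr' ?_ (Eventually.of_forall fun x => by simp)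
  filter_upwards [hcosne] with x hcx
  rw [Real.tan_eq_sin_div_cos]
  field_simp
  ring


lemma tan7' : (fun y : ℝ => Real.tan y - ((1:ℝ)*y + (1/3)*y^3 + (2/15)*y^5 + (17/315)*y^7))
    =o[𝓝 (0:ℝ)] fun y : ℝ => y ^ 7 :=
  tan7.congr' (Eventually.of_forall fun x => by ring) EventuallyEq.rfl

lemma sin7' : (fun y : ℝ => Real.sin y - ((1:ℝ)*y + (-1/6)*y^3 + (1/120)*y^5 + (-1/5040)*y^7))
    =o[𝓝 (0:ℝ)] fun y : ℝ => y ^ 7 :=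
  sin7.congr' (Eventually.of_forall fun x => by ring) EventuallyEq.rfl

lemma arctan7' : (fun y : ℝ => Real.arctan y - ((1:ℝ)*y + (-1/3)*y^3 + (1/5)*y^5 + (-1/7)*y^7))
    =o[𝓝 (0:ℝ)] fun y : ℝ => y ^ 7 :=
  arctan7.congr' (Eventually.of_forall fun x => by ring) EventuallyEq.rfl

lemma arcsin7' : (fun y : ℝ => Real.arcsin y - ((1:ℝ)*y + (1/6)*y^3 + (3/40)*y^5 + (5/112)*y^7))
    =o[𝓝 (0:ℝ)] fun y : ℝ => y ^ 7 :=
  arcsin7.congr' (Eventually.of_forall fun x => by ring) EventuallyEq.rfl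

lemma ratio_lim {f : ℝ → ℝ}
    (h : (fun x => f x - x^7/30) =o[𝓝 (0:ℝ)] fun x : ℝ => x ^ 7) :
    Tendsto (fun x => f x / x^7) (𝓝[≠] (0:ℝ)) (𝓝 (1/30 : ℝ)) := by
  have h0 := (h.mono (nhdsWithin_le_nhds (s := {(0:ℝ)}ᶜ))).tendsto_div_nhds_zero
  have h1 := h0.add (tendsto_const_nhds (x := (1/30:ℝ)) (f := 𝓝[≠] (0:ℝ)))
  rw [zero_add] at h1
  refine h1.congr' ?_
  filter_upwards [self_mem_nhdsWithin] with x hx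
  have hx0 : x ≠ 0 := hx
  have hx7 : x^7 ≠ 0 := pow_ne_zero 7 hx0
  field_simp
  ring

set_option maxHeartbeats 2000000 in
lemma numer_lim : Tendsto (fun x : ℝ =>
    (Real.tan (Real.sin x) - Real.sin (Real.tan x)) / x^7) (𝓝[≠] (0:ℝ)) (𝓝 (1/30 : ℝ)) := by
  apply ratio_lim
  have h1 := ex_comp_odd (p := fun x : ℝ => x - x^3/6 + x^5/120 - x^7/5040)
    (t := fun x : ℝ => 1 - x^2/6 + x^4/120 - x^6/5040)
    (c1 := (1:ℝ)) (c3 := (1/3:ℝ)) (c5 := (2/15:ℝ)) (c7 := (17/315:ℝ))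
    (g := Real.tan) sin7 tan7' (by fun_prop) (fun x => by ring)
  have h2 := ex_comp_odd (p := fun x : ℝ => x + x^3/3 + 2*x^5/15 + 17*x^7/315)
    (t := fun x : ℝ => 1 + x^2/3 + 2*x^4/15 + 17*x^6/315)
    (c1 := (1:ℝ)) (c3 := (-1/6:ℝ)) (c5 := (1/120:ℝ)) (c7 := (-1/5040:ℝ))
    (g := Real.sin) tan7 sin7' (by fun_prop) (fun x => by ring)
  have h3 := small (s := fun x : ℝ => (29/756)*x^1 + (14267/302400)*x^3 - (1889/362880)*x^5 + (1952317/762048000)*x^7 - (165377/101606400)*x^9 - (14363203/27433728000)*x^11 - (86575319/384072192000)*x^13 - (46122977/960180480000)*x^15 + (230943421/115221657600000)*x^17 + (4411819403/576108288000000)*x^19 + (4954854589/1075402137600000)*x^21 + (5675457516527/2903585771520000000)*x^23 + (776379118091/1161434308608000000)*x^25 + (159492145985209/813004016025600000000)*x^27 + (6954577460549/139372117032960000000)*x^29 + (107249555048039/9756048192307200000000)*x^31 + (2748502750001/1300806425640960000000)*x^33 + (24129856177877/70243546984611840000000)*x^35 + (44598669076771/983409657784565760000000)*x^37 + (4999521096641/1092677397538406400000000)*x^39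 + (109275246826577/413032056269517619200000000)*x^41) (by fun_prop) 7
  have h4 := (h1.sub h2).add h3
  refine h4.congr' (Eventually.of_forall fun x => ?_) EventuallyEq.rfl
  ring

set_option maxHeartbeats 2000000 in
lemma denom_lim : Tendsto (fun x : ℝ =>
    (Real.arctan (Real.arcsin x) - Real.arcsin (Real.arctan x)) / x^7) (𝓝[≠] (0:ℝ)) (𝓝 (1/30 : ℝ)) := by
  apply ratio_lim
  have h1 := ex_comp_odd (p := fun x : ℝ => x + x^3/6 + 3*x^5/40 + 5*x^7/112)
    (t := fun x : ℝ => 1 + x^2/6 + 3*x^4/40 + 5*x^6/112)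
    (c1 := (1:ℝ)) (c3 := (-1/3:ℝ)) (c5 := (1/5:ℝ)) (c7 := (-1/7:ℝ))
    (g := Real.arctan) arcsin7 arctan7' (by fun_prop) (fun x => by ring)
  have h2 := ex_comp_odd (p := fun x : ℝ => x - x^3/3 + x^5/5 - x^7/7)
    (t := fun x : ℝ => 1 - x^2/3 + x^4/5 - x^6/7)
    (c1 := (1:ℝ)) (c3 := (1/6:ℝ)) (c5 := (3/40:ℝ)) (c7 := (5/112:ℝ))
    (g := Real.arcsin) arctan7 arcsin7' (by fun_prop) (fun x => by ring)
  have h3 := small (s := fun x : ℝ => (- 13/756)*x^1 - (42659/302400)*x^3 + (6259/362880)*x^5 - (170176877/762048000)*x^7 + (1315747/11289600)*x^9 - (83251279/435456000)*x^11 + (3779429569/32006016000)*x^13 - (134939109233/1280240640000)*x^15 + (25141737079/406425600000)*x^17 - (226088873789/5689958400000)*x^19 + (89778166391/4425523200000)*x^21 - (392143123999/37933056000000)*x^23 + (591045355931/132765696000000)*x^25 - (136244014028369/74348789760000000)*x^27 + (12422086157/18882232320000)*x^29 - (56611680011/264351252480000)*x^31 + (434698449/7049366732800)*x^33 - (43224859/2819746693120)*x^35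 + (122862709/39476453703680)*x^37 - (8397983/15790581481472)*x^39 + (11972565/221068140740608)*x^41) (by fun_prop) 7
  have h4 := (h1.sub h2).add h3
  refine h4.congr' (Eventually.of_forall fun x => ?_) EventuallyEq.rfl
  ring

theorem arnold_limit :
    Tendsto (fun x : ℝ =>
      (Real.tan (Real.sin x) - Real.sin (Real.tan x)) /
        (Real.arctan (Real.arcsin x) - Real.arcsin (Real.arctan x)))
      (𝓝[≠] (0 : ℝ)) (𝓝 1) := by
  have h := numer_lim.div denom_lim (by norm_num)
  have h' : Tendsto (fun x : ℝ =>
      ((Real.tan (Real.sin x) - Real.sin (Real.tan x)) / x^7) /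
        ((Real.arctan (Real.arcsin x) - Real.arcsin (Real.arctan x)) / x^7))
      (𝓝[≠] (0:ℝ)) (𝓝 1) := by
    convert h using 2
    norm_num
    norm_num
  refine h'.congr' ?_
  filter_upwards [self_mem_nhdsWithin] with x hx
  have hx0 : x ≠ 0 := hx
  have hx7 : x^7 ≠ 0 := pow_ne_zero 7 hx0
  by_cases hD : Real.arctan (Real.arcsin x) - Real.arcsin (Real.arctan x) = 0
  · simp [hD]
  · field_simp
end

section
/- If f and g are real analytic functions on a neighborhood of 0 with f(0) = g(0) = 0, f'(0) = g'(0) = 1, f ≠ g near 0, and f and g are invertible near 0 with inverses f⁻¹ and g⁻¹, then lim_{x→0} (f(x) − g(x)) / (g⁻¹(x) − f⁻¹(x)) = 1. -/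
open Filter Topology

theorem arnold_general (f g finv ginv : ℝ → ℝ)
    (hf : AnalyticAt ℝ f 0) (hg : AnalyticAt ℝ g 0)
    (hf0 : f 0 = 0) (hg0 : g 0 = 0)
    (hf1 : deriv f 0 = 1) (hg1 : deriv g 0 = 1)
    (hfinv : ∀ᶠ x in 𝓝 (0 : ℝ), finv (f x) = x ∧ f (finv x) = x)
    (hginv : ∀ᶠ x in 𝓝 (0 : ℝ), ginv (g x) = x ∧ g (ginv x) = x)
    (hne : ∀ᶠ x in 𝓝[≠] (0 : ℝ), f x ≠ g x) :
    Tendsto (fun x => (f x - g x) / (ginv x - finv x)) (𝓝[≠] (0 : ℝ)) (𝓝 1) := by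
  -- values of inverses at 0
  have hfinv0 : finv 0 = 0 := by have h := hfinv.self_of_nhds.1; rwa [hf0] at h
  have hginv0 : ginv 0 = 0 := by have h := hginv.self_of_nhds.1; rwa [hg0] at h
  -- strict derivatives
  obtain ⟨p, hp⟩ := id hf
  obtain ⟨q, hq⟩ := id hg
  have hfd : HasStrictDerivAt f 1 0 := by
    have h := hp.hasStrictDerivAt
    have hval : (p 1 fun _ => 1) = 1 := h.hasDerivAt.deriv.symm.trans hf1
    rwa [hval] at h
  have hgd : HasStrictDerivAt g 1 0 := by
    have h := hq.hasStrictDerivAt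
    have hval : (q 1 fun _ => 1) = 1 := h.hasDerivAt.deriv.symm.trans hg1
    rwa [hval] at h
  have hfs : HasStrictDerivAt finv 1 0 := by
    have h := hfd.to_local_left_inverse one_ne_zero (hfinv.mono fun x hx => hx.1)
    simpa [hf0] using h
  have hgs : HasStrictDerivAt ginv 1 0 := by
    have h := hgd.to_local_left_inverse one_ne_zero (hginv.mono fun x hx => hx.1)
    simpa [hg0] using h
  -- order / factorization of f - g
  have hφ : AnalyticAt ℝ (fun x => f x - g x) 0 := hf.sub hg
  have hor : analyticOrderAt (fun x => f x - g x) 0 ≠ ⊤ := by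
    intro h
    rw [analyticOrderAt_eq_top] at h
    have h' := h.filter_mono (nhdsWithin_le_nhds : 𝓝[≠] (0:ℝ) ≤ 𝓝 0)
    obtain ⟨x, h1, h2⟩ := (hne.and h').exists
    exact h1 (sub_eq_zero.mp h2)
  obtain ⟨n, hn⟩ := WithTop.ne_top_iff_exists.mp hor
  obtain ⟨ψ, hψa, hψ0, hψeq⟩ := (hφ.analyticOrderAt_eq_natCast (n := n)).mp hn.symm
  have hψeq' : ∀ᶠ z in 𝓝 (0:ℝ), f z - g z = z ^ n * ψ z := by
    filter_upwards [hψeq] with z hz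
    simpa using hz
  have hψne : ∀ᶠ z in 𝓝 (0:ℝ), ψ z ≠ 0 := hψa.continuousAt.eventually_ne hψ0
  -- limits of finv, ginv
  have hu0 : Tendsto finv (𝓝[≠] (0:ℝ)) (𝓝 0) := by
    have := hfs.hasDerivAt.continuousAt.tendsto.mono_left (nhdsWithin_le_nhds : 𝓝[≠] (0:ℝ) ≤ 𝓝 0)
    rwa [hfinv0] at this
  have hv0 : Tendsto ginv (𝓝[≠] (0:ℝ)) (𝓝 0) := by
    have := hgs.hasDerivAt.continuousAt.tendsto.mono_left (nhdsWithin_le_nhds : 𝓝[≠] (0:ℝ) ≤ 𝓝 0)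
    rwa [hginv0] at this
  have hevx : ∀ᶠ x in 𝓝[≠] (0:ℝ), x ≠ 0 := eventually_mem_nhdsWithin
  have hev_f : ∀ᶠ x in 𝓝[≠] (0:ℝ), f (finv x) = x :=
    (hfinv.filter_mono nhdsWithin_le_nhds).mono fun x hx => hx.2
  have hev_g : ∀ᶠ x in 𝓝[≠] (0:ℝ), g (ginv x) = x :=
    (hginv.filter_mono nhdsWithin_le_nhds).mono fun x hx => hx.2
  have hu_ne : ∀ᶠ x in 𝓝[≠] (0:ℝ), finv x ≠ 0 := by
    filter_upwards [hev_f, hevx] with x h1 h2 h3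
    exact h2 (by rw [← h1, h3, hf0])
  have huW : Tendsto finv (𝓝[≠] (0:ℝ)) (𝓝[≠] (0:ℝ)) :=
    tendsto_nhdsWithin_iff.mpr ⟨hu0, hu_ne⟩
  -- slope of finv : finv x / x → 1, hence x / finv x → 1
  have hslope : Tendsto (fun x => finv x / x) (𝓝[≠] (0:ℝ)) (𝓝 1) := by
    have h := hasDerivAt_iff_tendsto_slope.mp hfs.hasDerivAt
    refine h.congr fun x => ?_
    simp [slope_def_field, hfinv0]
  have hx_u : Tendsto (fun x => x / finv x) (𝓝[≠] (0:ℝ)) (𝓝 1) := by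
    have := hslope.inv₀ one_ne_zero
    simpa [inv_div] using this
  -- little-o from strict derivative of g
  have hqp : Tendsto (fun x => (ginv x, finv x)) (𝓝[≠] (0:ℝ)) (𝓝 ((0:ℝ), (0:ℝ))) :=
    hv0.prodMk_nhds hu0
  have ho : (fun p : ℝ × ℝ => g p.1 - g p.2 - (p.1 - p.2)) =o[𝓝 ((0:ℝ), (0:ℝ))]
      fun p : ℝ × ℝ => p.1 - p.2 := by
    have h := hgd.isLittleO
    simpa using h
  have hBt : Tendsto
      (fun x => (g (ginv x) - g (finv x) - (ginv x - finv x)) / (ginv x - finv x))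
      (𝓝[≠] (0:ℝ)) (𝓝 0) :=
    (ho.comp_tendsto hqp).tendsto_div_nhds_zero
  -- the model limit
  have hT : Tendsto (fun x => ((x / finv x) ^ n * (ψ x / ψ (finv x))) *
      ((g (ginv x) - g (finv x) - (ginv x - finv x)) / (ginv x - finv x) + 1))
      (𝓝[≠] (0:ℝ)) (𝓝 1) := by
    have h1 : Tendsto (fun x => (x / finv x) ^ n) (𝓝[≠] (0:ℝ)) (𝓝 1) := by
      simpa using hx_u.pow n
    have h2 : Tendsto (fun x => ψ x / ψ (finv x)) (𝓝[≠] (0:ℝ)) (𝓝 1) := by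
      have hc := hψa.continuousAt.tendsto
      have := (hc.mono_left nhdsWithin_le_nhds).div (hc.comp hu0) hψ0
      rw [div_self hψ0] at this
      exact this
    have h3 := hBt.add (tendsto_const_nhds (x := (1:ℝ)))
    simpa using (h1.mul h2).mul h3
  -- eventual equality with the target
  refine Tendsto.congr' ?_ hT
  filter_upwards [hevx, hev_f, hev_g, huW.eventually hne, hu0.eventually hψeq',
    hu0.eventually hψne, hψeq'.filter_mono nhdsWithin_le_nhds, hu_ne]
    with x hx hfu hgv hAne hBeq hCne hDeq hune
  have hφu_ne : f (finv x) - g (finv x) ≠ 0 := sub_ne_zero.mpr hAne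
  have hgvu : g (ginv x) - g (finv x) = f (finv x) - g (finv x) := by rw [hgv, hfu]
  have hd_ne : ginv x - finv x ≠ 0 := by
    intro h
    apply hφu_ne
    rw [← hgvu]
    have : ginv x = finv x := by linarith
    rw [this, sub_self]
  rw [hgvu, hBeq, hDeq]
  field_simp
  rw [sub_add_cancel, div_pow]
  field_simp
end

section
/- If f and g are formal power series with zero constant term, linear coefficient 1, and smallest differing coefficient at index N (a_N ≠ A_N), then the order (valuation) of f − g equals the order of g⁻¹ − f⁻¹ equals N, and the leading coefficients of f − g and g⁻¹ − f⁻¹ are both a_N − A_N. -/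
open PowerSeries

/-- Composition `f ∘ g` of formal power series (intended for `g` with zero
constant term): the `n`-th coefficient is computed from the truncation of `f`
to degree `n`. -/
noncomputable def PSComp (f g : PowerSeries ℝ) : PowerSeries ℝ :=
  PowerSeries.mk fun n =>
    PowerSeries.coeff n (Polynomial.eval₂ (PowerSeries.C) g (f.trunc (n + 1)))

lemma coeff_PSComp (f h : PowerSeries ℝ) (n : ℕ) :
    PowerSeries.coeff n (PSComp f h) =
      ∑ m ∈ Finset.range (n + 1), PowerSeries.coeff m f * PowerSeries.coeff n (h ^ m) := by
  rw [PSComp, PowerSeries.coeff_mk, PowerSeries.eval₂_trunc_eq_sum_range, map_sum]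
  exact Finset.sum_congr rfl fun m _ => by rw [PowerSeries.coeff_C_mul]

lemma coeff_pow_eq_zero {h : PowerSeries ℝ} (h0 : PowerSeries.coeff 0 h = 0)
    {m n : ℕ} (hmn : n < m) : PowerSeries.coeff n (h ^ m) = 0 := by
  have hX : (X : PowerSeries ℝ) ∣ h := PowerSeries.X_dvd_iff.mpr (by
    rwa [← PowerSeries.coeff_zero_eq_constantCoeff_apply])
  have : (X : PowerSeries ℝ) ^ m ∣ h ^ m := pow_dvd_pow_of_dvd hX m
  exact PowerSeries.X_pow_dvd_iff.mp this n hmn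

lemma coeff_zero_pow' {h : PowerSeries ℝ} (h0 : PowerSeries.coeff 0 h = 0)
    {m : ℕ} (hm : 1 ≤ m) : PowerSeries.coeff 0 (h ^ m) = 0 := by
  rw [PowerSeries.coeff_zero_eq_constantCoeff] at h0 ⊢
  rw [map_pow, h0, zero_pow (by omega)]

lemma coeff_self_pow {h : PowerSeries ℝ} (h0 : PowerSeries.coeff 0 h = 0) (n : ℕ) :
    PowerSeries.coeff n (h ^ n) = (PowerSeries.coeff 1 h) ^ n := by
  induction n with
  | zero => simp
  | succ n ih =>
    rw [pow_succ, PowerSeries.coeff_mul]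
    rw [Finset.sum_eq_single_of_mem (n, 1) (by simp [Finset.mem_antidiagonal])]
    · rw [ih, pow_succ]
    · rintro ⟨i, k⟩ hik hne
      rw [Finset.HasAntidiagonal.mem_antidiagonal] at hik
      rcases lt_trichotomy i n with hlt | heq | hgt
      · rw [coeff_pow_eq_zero h0 hlt, zero_mul]
      · exact absurd (by simp only [Prod.mk.injEq]; omega : (i, k) = (n, 1)) hne
      · have : k = 0 := by omega
        subst this
        rw [h0, mul_zero]

lemma agree_pow {u v : PowerSeries ℝ} (n : ℕ)
    (hu0 : PowerSeries.coeff 0 u = 0) (hv0 : PowerSeries.coeff 0 v = 0)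
    (hag : ∀ k < n, PowerSeries.coeff k u = PowerSeries.coeff k v) :
    ∀ m, 2 ≤ m → ∀ j ≤ n, PowerSeries.coeff j (u ^ m) = PowerSeries.coeff j (v ^ m) := by
  intro m
  induction m with
  | zero => omega
  | succ m ih =>
    intro hm j hj
    rcases Nat.lt_or_ge m 2 with hm2 | hm2
    · -- m+1 = 2, so m = 1 : base case u^2 = u * u
      have : m = 1 := by omega
      subst this
      rw [show u ^ (1+1) = u * u by ring, show v ^ (1+1) = v * v by ring,
        PowerSeries.coeff_mul, PowerSeries.coeff_mul]
      apply Finset.sum_congr rfl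
      rintro ⟨i, k⟩ hik
      rw [Finset.HasAntidiagonal.mem_antidiagonal] at hik
      rcases Nat.eq_zero_or_pos i with hi | hi
      · subst hi; rw [hu0, hv0, zero_mul, zero_mul]
      rcases Nat.eq_zero_or_pos k with hk | hk
      · subst hk; rw [hu0, hv0, mul_zero, mul_zero]
      rw [hag i (by omega), hag k (by omega)]
    · -- inductive step
      rw [pow_succ u, pow_succ v, PowerSeries.coeff_mul, PowerSeries.coeff_mul]
      apply Finset.sum_congr rfl
      rintro ⟨i, k⟩ hik
      rw [Finset.HasAntidiagonal.mem_antidiagonal] at hik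
      rcases Nat.eq_zero_or_pos k with hk | hk
      · subst hk; rw [hu0, hv0, mul_zero, mul_zero]
      rcases Nat.eq_zero_or_pos i with hi | hi
      · subst hi
        rw [coeff_zero_pow' hu0 (by omega), coeff_zero_pow' hv0 (by omega), zero_mul, zero_mul]
      rw [ih hm2 i (by omega), hag k (by omega)]

lemma inv_coeff {f h : PowerSeries ℝ} (hf0 : PowerSeries.coeff 0 f = 0)
    (hf1 : PowerSeries.coeff 1 f = 1)
    (hfi : PSComp f h = PowerSeries.X) {n : ℕ} (hn : 1 ≤ n) :
    PowerSeries.coeff n h = PowerSeries.coeff n (PowerSeries.X : PowerSeries ℝ) -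
      ∑ m ∈ Finset.Ico 2 (n + 1), PowerSeries.coeff m f * PowerSeries.coeff n (h ^ m) := by
  have := congrArg (PowerSeries.coeff n) hfi
  rw [coeff_PSComp] at this
  rw [Finset.range_eq_Ico, ← Finset.sum_Ico_consecutive _ (by omega : 0 ≤ 2) (by omega : 2 ≤ n + 1)]
    at this
  have h2 : ∑ m ∈ Finset.Ico 0 2, PowerSeries.coeff m f * PowerSeries.coeff n (h ^ m)
      = PowerSeries.coeff n h := by
    rw [show Finset.Ico 0 2 = {0, 1} by decide]
    rw [Finset.sum_insert (by decide), Finset.sum_singleton]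
    rw [hf0, hf1, zero_mul, pow_one, one_mul, zero_add]
  rw [h2] at this
  linarith [this]

theorem order_of_difference (f g finv ginv : PowerSeries ℝ) (N : ℕ)
    (hf0 : PowerSeries.coeff 0 f = 0) (hg0 : PowerSeries.coeff 0 g = 0)
    (hf1 : PowerSeries.coeff 1 f = 1) (hg1 : PowerSeries.coeff 1 g = 1)
    (hfinv0 : PowerSeries.coeff 0 finv = 0) (hginv0 : PowerSeries.coeff 0 ginv = 0)
    (hfi : PSComp f finv = PowerSeries.X) (hgi : PSComp g ginv = PowerSeries.X)
    (hagree : ∀ k < N, PowerSeries.coeff k f = PowerSeries.coeff k g)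
    (hdiff : PowerSeries.coeff N f ≠ PowerSeries.coeff N g) :
    (f - g).order = N ∧ (ginv - finv).order = N ∧
      PowerSeries.coeff N (f - g) = PowerSeries.coeff N f - PowerSeries.coeff N g ∧
      PowerSeries.coeff N (ginv - finv) =
        PowerSeries.coeff N f - PowerSeries.coeff N g := by
  -- N ≥ 2
  have hN2 : 2 ≤ N := by
    by_contra hc
    interval_cases N
    · exact hdiff (hf0.trans hg0.symm)
    · exact hdiff (hf1.trans hg1.symm)
  -- finv and ginv agree below N
  have hinvagree : ∀ k < N, PowerSeries.coeff k finv = PowerSeries.coeff k ginv := by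
    intro k
    induction k using Nat.strong_induction_on with
    | _ k ih =>
      intro hk
      rcases Nat.eq_zero_or_pos k with h0 | h0
      · subst h0; rw [hfinv0, hginv0]
      rw [inv_coeff hf0 hf1 hfi h0, inv_coeff hg0 hg1 hgi h0]
      congr 1
      apply Finset.sum_congr rfl
      intro m hm
      rw [Finset.mem_Ico] at hm
      rw [hagree m (by omega),
        agree_pow k hfinv0 hginv0 (fun j hj => ih j hj (by omega)) m hm.1 k le_rfl]
  -- coefficient at N of ginv - finv
  have hkey : PowerSeries.coeff N ginv - PowerSeries.coeff N finv =
      PowerSeries.coeff N f - PowerSeries.coeff N g := by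
    rw [inv_coeff hf0 hf1 hfi (by omega : 1 ≤ N), inv_coeff hg0 hg1 hgi (by omega : 1 ≤ N)]
    have hsplit : ∀ u : PowerSeries ℝ, ∀ c : ℕ → ℝ,
        ∑ m ∈ Finset.Ico 2 (N + 1), c m * PowerSeries.coeff N (u ^ m) =
        (∑ m ∈ Finset.Ico 2 N, c m * PowerSeries.coeff N (u ^ m)) +
          c N * PowerSeries.coeff N (u ^ N) := by
      intro u c
      rw [Finset.sum_Ico_succ_top (by omega)]
    rw [hsplit finv, hsplit ginv]
    have hmid : ∑ m ∈ Finset.Ico 2 N, PowerSeries.coeff m f * PowerSeries.coeff N (finv ^ m)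
        = ∑ m ∈ Finset.Ico 2 N, PowerSeries.coeff m g * PowerSeries.coeff N (ginv ^ m) := by
      apply Finset.sum_congr rfl
      intro m hm
      rw [Finset.mem_Ico] at hm
      rw [hagree m hm.2, agree_pow N hfinv0 hginv0 hinvagree m hm.1 N le_rfl]
    -- coeff 1 finv = 1 and coeff 1 ginv = 1
    have hfinv1 : PowerSeries.coeff 1 finv = 1 := by
      have := inv_coeff hf0 hf1 hfi (le_refl 1)
      simpa using this
    have hginv1 : PowerSeries.coeff 1 ginv = 1 := by
      have := inv_coeff hg0 hg1 hgi (le_refl 1)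
      simpa using this
    rw [coeff_self_pow hfinv0, coeff_self_pow hginv0, hfinv1, hginv1, one_pow]
    rw [hmid]
    ring
  have hcoeffN : PowerSeries.coeff N (ginv - finv) =
      PowerSeries.coeff N f - PowerSeries.coeff N g := by
    rw [map_sub]; exact hkey
  have hne : PowerSeries.coeff N f - PowerSeries.coeff N g ≠ 0 := sub_ne_zero.mpr hdiff
  refine ⟨?_, ?_, by rw [map_sub], hcoeffN⟩
  · rw [PowerSeries.order_eq_nat]
    constructor
    · rw [map_sub]; exact hne
    · intro i hi; rw [map_sub, hagree i hi, sub_self]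
  · rw [PowerSeries.order_eq_nat]
    constructor
    · rw [hcoeffN]; exact hne
    · intro i hi; rw [map_sub, hinvagree i hi, sub_self]
end
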